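/- arXiv:1603.03648 — 3 statements merged into one kernel-verified Lean document; each statement's English description precedes it below -/
import Mathlib

section
/- Let V_* > 0, V_** ∈ ℝ, η ≥ 0, b_1 > 0, and let W : [1,∞) → ℝ be continuous, strictly increasing, with W(1) = 0 and W(λ) → ∞ as λ → ∞. Define g_η(λ) = V_* / (1 + η(1 − 1/λ)) and h(λ) = V_** + W(λ)/b_1. Then the equation g_η(ν) = h(ν) has a solution ν > 1 with g_η(ν) > 0 if and only if V_** < V_*; moreover when V_** < V_* the solution is unique. -/
/-- Solvability of the treadmilling system: g_η(ν) = h(ν) has a solution ν > 1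
with g_η(ν) > 0 iff V_** < V_*, and the solution is then unique. -/
theorem stmt8 (Vs Vss η b1 : ℝ) (hVs : 0 < Vs) (hη : 0 ≤ η) (hb1 : 0 < b1)
    (W : ℝ → ℝ) (hWc : ContinuousOn W (Set.Ici 1))
    (hWmono : StrictMonoOn W (Set.Ici 1)) (hW1 : W 1 = 0)
    (hWinf : Filter.Tendsto W Filter.atTop Filter.atTop) :
    ((∃ ν : ℝ, 1 < ν ∧ Vs / (1 + η * (1 - 1 / ν)) = Vss + W ν / b1 ∧
        0 < Vs / (1 + η * (1 - 1 / ν))) ↔ Vss < Vs) ∧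
      (Vss < Vs → ∃! ν : ℝ, 1 < ν ∧
        Vs / (1 + η * (1 - 1 / ν)) = Vss + W ν / b1 ∧
        0 < Vs / (1 + η * (1 - 1 / ν))) := by
  set d : ℝ → ℝ := fun x => 1 + η * (1 - 1 / x) with hd
  have hd1 : ∀ x : ℝ, 1 ≤ x → 1 ≤ d x := by
    intro x hx
    have h0 : (0:ℝ) < x := lt_of_lt_of_le one_pos hx
    have h1 : 1 / x ≤ 1 := by rw [div_le_one h0]; exact hx
    have := mul_nonneg hη (sub_nonneg.2 h1)
    simp only [hd]; linarith
  have hdpos : ∀ x : ℝ, 1 ≤ x → 0 < d x := fun x hx => lt_of_lt_of_le one_pos (hd1 x hx)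
  have hdmono : ∀ a b : ℝ, 1 ≤ a → a ≤ b → d a ≤ d b := by
    intro a b ha hab
    have ha0 : (0:ℝ) < a := lt_of_lt_of_le one_pos ha
    have h1 : 1 / b ≤ 1 / a := one_div_le_one_div_of_le ha0 hab
    have := mul_le_mul_of_nonneg_left (by linarith : 1 - 1/a ≤ 1 - 1/b) hη
    simp only [hd]; linarith
  have hgle : ∀ x : ℝ, 1 ≤ x → Vs / d x ≤ Vs := by
    intro x hx
    calc Vs / d x ≤ Vs / 1 := by
          apply div_le_div_of_nonneg_left (le_of_lt hVs) one_pos (hd1 x hx)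
      _ = Vs := div_one Vs
  set F : ℝ → ℝ := fun x => Vs / d x - (Vss + W x / b1) with hF
  have hFanti : StrictAntiOn F (Set.Ici 1) := by
    intro a ha b hb hab
    have hWab : W a / b1 < W b / b1 :=
      div_lt_div_of_pos_right (hWmono ha hb hab) hb1
    have hgab : Vs / d b ≤ Vs / d a :=
      div_le_div_of_nonneg_left (le_of_lt hVs) (hdpos a ha) (hdmono a b ha (le_of_lt hab))
    simp only [hF]; linarith
  have hdc : ContinuousOn d (Set.Ici 1) := by
    apply continuousOn_const.add
    apply continuousOn_const.mul
    apply continuousOn_const.sub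
    exact continuousOn_const.div continuousOn_id
      (fun x hx => ne_of_gt (lt_of_lt_of_le one_pos hx))
  have hFc : ContinuousOn F (Set.Ici 1) := by
    apply ContinuousOn.sub
    · exact continuousOn_const.div hdc (fun x hx => ne_of_gt (hdpos x hx))
    · exact continuousOn_const.add (hWc.div_const b1)
  have hd1eq : d 1 = 1 := by simp [hd]
  have hF1 : F 1 = Vs - Vss := by simp [hF, hd1eq, hW1]
  -- existence
  have hex : Vss < Vs → ∃ ν : ℝ, 1 < ν ∧ F ν = 0 := by
    intro hVV
    obtain ⟨M, hWM, hM1⟩ :=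
      ((hWinf.eventually_ge_atTop (b1 * (Vs - Vss) + 1)).and
        (Filter.eventually_ge_atTop (1:ℝ))).exists
    have hWMdiv : Vs - Vss + 1 / b1 ≤ W M / b1 := by
      rw [le_div_iff₀ hb1]
      have : (Vs - Vss + 1 / b1) * b1 = b1 * (Vs - Vss) + 1 := by
        field_simp
      rw [this]; exact hWM
    have hFM : F M < 0 := by
      have := hgle M hM1
      have h1b : 0 < 1 / b1 := by positivity
      simp only [hF]; linarith
    have hF1pos : 0 < F 1 := by rw [hF1]; linarith
    have h0mem : (0:ℝ) ∈ Set.Ioo (F M) (F 1) := ⟨hFM, hF1pos⟩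
    obtain ⟨ν, hνmem, hFν⟩ :=
      intermediate_value_Ioo' hM1 (hFc.mono (Set.Icc_subset_Ici_self)) h0mem
    exact ⟨ν, hνmem.1, hFν⟩
  have key : ∀ ν : ℝ, 1 < ν →
      ((Vs / (1 + η * (1 - 1 / ν)) = Vss + W ν / b1 ∧
        0 < Vs / (1 + η * (1 - 1 / ν))) ↔ F ν = 0) := by
    intro ν hν
    constructor
    · intro ⟨h1, _⟩; simp only [hF, hd]; linarith
    · intro h
      have hpos : 0 < Vs / d ν := div_pos hVs (hdpos ν (le_of_lt hν))
      simp only [hF] at h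
      exact ⟨by simp only [hd] at h ⊢; linarith, by simpa [hd] using hpos⟩
  constructor
  · constructor
    · rintro ⟨ν, hν, heq, hpos⟩
      have hWν : 0 < W ν := by
        have := hWmono (Set.self_mem_Ici) (le_of_lt hν : ν ∈ Set.Ici 1) hν
        rwa [hW1] at this
      have hgν : Vs / d ν ≤ Vs := hgle ν (le_of_lt hν)
      have : Vs / (1 + η * (1 - 1 / ν)) ≤ Vs := hgν
      have hWd : 0 < W ν / b1 := div_pos hWν hb1
      linarith [heq ▸ this]
    · intro hVV
      obtain ⟨ν, hν, hFν⟩ := hex hVV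
      exact ⟨ν, hν, ((key ν hν).2 hFν)⟩
  · intro hVV
    obtain ⟨ν, hν, hFν⟩ := hex hVV
    refine ⟨ν, ⟨hν, (key ν hν).2 hFν⟩, ?_⟩
    rintro y ⟨hy, hyeq⟩
    have hFy : F y = 0 := (key y hy).1 hyeq
    exact hFanti.injOn (le_of_lt hy : y ∈ Set.Ici 1) (le_of_lt hν : ν ∈ Set.Ici 1)
      (by rw [hFy, hFν])
end

section
/- Suppose V_** ≥ 0 under the treadmilling conditions (V_* > 0, V_** < V_*). Then as η → ∞, ν(η) → 1 and V_0(η) = V_** + W(ν(η))/b_1 → V_**; moreover η(ν(η) − 1) → (V_* − V_**)/V_** when V_** > 0. -/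
/-!
Write `D(η) = 1 + η (1 - 1/ν(η))`, so that `V_* / D(η) = g(ν(η))` with
`g = V_** + W / b_1` increasing and positive on `(1, ∞)`. If `ν(η) ≥ a > 1`, then
`D(η) ≥ 1 + η (1 - 1/a)` grows linearly in `η` while `g(ν(η)) ≥ g(a) > 0`, which is impossible
for large `η`; hence `ν(η) → 1`, and `V_0(η) → V_**` by continuity of `W` at `1`. When
`V_** > 0`, `D(η) = V_* / V_0(η) → V_* / V_**`, and `η (ν - 1) = ν · (D - 1)` gives the last limit.
-/

open Filter Topology Set

theorem mul_one_sub_inv_le_of_le_div {Vs K a x η : ℝ} (hK : 0 < K) (ha : 1 < a) (hax : a ≤ x)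
    (hη : 0 ≤ η) (h : K ≤ Vs / (1 + η * (1 - 1 / x))) : η * (1 - 1 / a) ≤ Vs / K - 1 := by
  have ha0 : 0 < a := one_pos.trans ha
  have hc0 : 0 ≤ 1 - 1 / a := sub_nonneg.2 ((div_le_one ha0).2 ha.le)
  have hD : 1 + η * (1 - 1 / a) ≤ 1 + η * (1 - 1 / x) := by gcongr
  have hD0 : 0 < 1 + η * (1 - 1 / a) := by positivity
  rw [le_div_iff₀ (hD0.trans_le hD)] at h
  rw [le_sub_iff_add_le, le_div_iff₀ hK]
  nlinarith

section Root

variable {Vs : ℝ} {g ν : ℝ → ℝ} (hg : MonotoneOn g (Ioi 1)) (hgpos : ∀ x, 1 < x → 0 < g x)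
  (heq : ∀ η, 0 ≤ η → Vs / (1 + η * (1 - 1 / ν η)) = g (ν η))
include hg hgpos heq

theorem eventually_lt_of_div_one_add_eq {a : ℝ} (ha : 1 < a) : ∀ᶠ η in atTop, ν η < a := by
  filter_upwards [eventually_ge_atTop 0,
    eventually_gt_atTop ((Vs / g a - 1) / (1 - 1 / a))] with η hη0 hη
  by_contra! hνa
  have hga : g a ≤ Vs / (1 + η * (1 - 1 / ν η)) :=
    heq η hη0 ▸ hg ha (ha.trans_le hνa) hνa
  have hbound := mul_one_sub_inv_le_of_le_div (hgpos a ha) ha hνa hη0 hga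
  have hc : 0 < 1 - 1 / a := sub_pos.2 ((div_lt_one (one_pos.trans ha)).2 ha)
  rw [div_lt_iff₀ hc] at hη
  linarith

theorem tendsto_nhds_one_of_div_one_add_eq (hν1 : ∀ η, 0 ≤ η → 1 < ν η) :
    Tendsto ν atTop (𝓝 1) := by
  refine tendsto_order.2 ⟨fun a ha => ?_, fun a ha =>
    eventually_lt_of_div_one_add_eq hg hgpos heq ha⟩
  filter_upwards [eventually_ge_atTop 0] with η hη
  exact ha.trans (hν1 η hη)

end Root

theorem tendsto_of_div_eq {α : Type*} {l : Filter α} {D R : α → ℝ} {c L : ℝ} (hL : L ≠ 0)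
    (hDR : ∀ᶠ x in l, c / D x = R x) (hR : Tendsto R l (𝓝 L)) :
    Tendsto D l (𝓝 (c / L)) := by
  refine (tendsto_const_nhds.div hR hL).congr' ?_
  filter_upwards [hDR, hR.eventually_ne hL] with x hx hRx
  rw [← hx] at hRx
  rw [Pi.div_apply, ← hx, div_div_cancel₀ (div_ne_zero_iff.1 hRx).1]

theorem stmt15_general (Vs Vss b1 : ℝ)
    (hVss0 : 0 ≤ Vss) (hb1 : 0 < b1)
    (W : ℝ → ℝ) (hWc : ContinuousOn W (Set.Ici 1))
    (hWmono : StrictMonoOn W (Set.Ici 1)) (hW1 : W 1 = 0)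
    (ν : ℝ → ℝ)
    (hν1 : ∀ η : ℝ, 0 ≤ η → 1 < ν η)
    (heq : ∀ η : ℝ, 0 ≤ η →
      Vs / (1 + η * (1 - 1 / ν η)) = Vss + W (ν η) / b1) :
    Filter.Tendsto ν Filter.atTop (nhds 1) ∧
      Filter.Tendsto (fun η => Vss + W (ν η) / b1) Filter.atTop (nhds Vss) ∧
      (0 < Vss → Filter.Tendsto (fun η => η * (ν η - 1)) Filter.atTop
        (nhds ((Vs - Vss) / Vss))) := by
  have hg : MonotoneOn (fun x => Vss + W x / b1) (Ioi 1) := fun x hx y hy hxy => by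
    have := hWmono.monotoneOn (Ioi_subset_Ici_self hx) (Ioi_subset_Ici_self hy) hxy
    dsimp only
    gcongr
  have hgpos (x : ℝ) (hx : 1 < x) : 0 < Vss + W x / b1 := by
    have := hWmono self_mem_Ici hx.le hx
    rw [hW1] at this
    positivity
  have hν := tendsto_nhds_one_of_div_one_add_eq hg hgpos heq hν1
  have hνIci : Tendsto ν atTop (𝓝[Ici 1] 1) := tendsto_nhdsWithin_iff.2 ⟨hν,
    (eventually_ge_atTop 0).mono fun η hη => (hν1 η hη).le⟩
  have hV0 : Tendsto (fun η => Vss + W (ν η) / b1) atTop (𝓝 Vss) := by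
    simpa [hW1] using (((hWc 1 self_mem_Ici).tendsto.comp hνIci).div_const b1).const_add Vss
  refine ⟨hν, hV0, fun hVss => ?_⟩
  have hD : Tendsto (fun η => 1 + η * (1 - 1 / ν η)) atTop (𝓝 (Vs / Vss)) :=
    tendsto_of_div_eq hVss.ne' ((eventually_ge_atTop 0).mono heq) hV0
  have hlim := hν.mul (hD.sub_const 1)
  rw [one_mul, div_sub_one hVss.ne'] at hlim
  refine hlim.congr' ((eventually_ge_atTop 0).mono fun η hη => ?_)
  have := (one_pos.trans (hν1 η hη)).ne'
  field_simp
  ring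

/-- Large bead, V_** ≥ 0: ν(η) → 1, V_0(η) → V_**, and if V_** > 0 then
η(ν(η) − 1) → (V_* − V_**)/V_**. -/
theorem stmt15 (Vs Vss b1 : ℝ) (hVs : 0 < Vs) (hVss : Vss < Vs)
    (hVss0 : 0 ≤ Vss) (hb1 : 0 < b1)
    (W : ℝ → ℝ) (hWc : ContinuousOn W (Set.Ici 1))
    (hWmono : StrictMonoOn W (Set.Ici 1)) (hW1 : W 1 = 0)
    (hWinf : Filter.Tendsto W Filter.atTop Filter.atTop)
    (ν : ℝ → ℝ)
    (hν1 : ∀ η : ℝ, 0 ≤ η → 1 < ν η)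
    (heq : ∀ η : ℝ, 0 ≤ η →
      Vs / (1 + η * (1 - 1 / ν η)) = Vss + W (ν η) / b1) :
    Filter.Tendsto ν Filter.atTop (nhds 1) ∧
      Filter.Tendsto (fun η => Vss + W (ν η) / b1) Filter.atTop (nhds Vss) ∧
      (0 < Vss → Filter.Tendsto (fun η => η * (ν η - 1)) Filter.atTop
        (nhds ((Vs - Vss) / Vss))) :=
  stmt15_general Vs Vss b1 hVss0 hb1 W hWc hWmono hW1 ν hν1 heq
end

section
/- Suppose V_** < 0 under the treadmilling conditions (V_* > 0). Then as η → ∞, ν(η) → ν_** where ν_** > 1 is the unique root of W(ν_**)/b_1 = −V_**, and V_0(η) → 0 with η·V_0(η) → V_*/(1 − 1/ν_**). -/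
/-- Large bead, V_** < 0: ν(η) → ν_** (unique root of W(ν)/b1 = −V_**),
V_0(η) → 0 and η·V_0(η) → V_*/(1 − 1/ν_**). -/
theorem stmt16 (Vs Vss b1 : ℝ) (hVs : 0 < Vs) (hVssneg : Vss < 0) (hb1 : 0 < b1)
    (W : ℝ → ℝ) (hWc : ContinuousOn W (Set.Ici 1))
    (hWmono : StrictMonoOn W (Set.Ici 1)) (hW1 : W 1 = 0)
    (hWinf : Filter.Tendsto W Filter.atTop Filter.atTop)
    (ν : ℝ → ℝ)
    (hν1 : ∀ η : ℝ, 0 ≤ η → 1 < ν η)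
    (heq : ∀ η : ℝ, 0 ≤ η →
      Vs / (1 + η * (1 - 1 / ν η)) = Vss + W (ν η) / b1)
    (νss : ℝ) (hνss : 1 < νss) (hroot : W νss / b1 = -Vss) :
    Filter.Tendsto ν Filter.atTop (nhds νss) ∧
      Filter.Tendsto (fun η => Vss + W (ν η) / b1) Filter.atTop (nhds 0) ∧
      Filter.Tendsto (fun η => η * (Vss + W (ν η) / b1)) Filter.atTop
        (nhds (Vs / (1 - 1 / νss))) := by
  have hb1' : b1 ≠ 0 := ne_of_gt hb1
  have hνss0 : (0:ℝ) < νss := lt_trans one_pos hνss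
  set d : ℝ := 1 - 1/νss with hd_def
  have hd : 0 < d := by
    have : 1/νss < 1 := by rw [div_lt_one hνss0]; exact hνss
    simp only [hd_def]; linarith
  have hWss : W νss = -Vss * b1 := by
    field_simp at hroot; linarith
  have hmem : ∀ η, 0 ≤ η → ν η ∈ Set.Ici (1:ℝ) := fun η hη => le_of_lt (hν1 η hη)
  have hmemss : νss ∈ Set.Ici (1:ℝ) := le_of_lt hνss
  have hden : ∀ η, 0 ≤ η → 0 < 1 + η * (1 - 1/ν η) := by
    intro η hη
    have h1 : 0 < ν η := lt_trans one_pos (hν1 η hη)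
    have : 1/ν η < 1 := by rw [div_lt_one h1]; exact hν1 η hη
    nlinarith
  have hfpos : ∀ η, 0 ≤ η → 0 < Vss + W (ν η) / b1 := by
    intro η hη
    rw [← heq η hη]
    exact div_pos hVs (hden η hη)
  have hgt : ∀ η, 0 ≤ η → νss < ν η := by
    intro η hη
    by_contra h
    push_neg at h
    have hle : W (ν η) ≤ W νss := hWmono.monotoneOn (hmem η hη) hmemss h
    have h2 : W (ν η) / b1 ≤ W νss / b1 := by gcongr
    rw [hroot] at h2
    linarith [hfpos η hη]
  -- second limit
  have htop : Filter.Tendsto (fun η : ℝ => 1 + η * d) Filter.atTop Filter.atTop := by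
    apply Filter.tendsto_atTop_add_const_left
    exact Filter.Tendsto.atTop_mul_const hd Filter.tendsto_id
  have hupper : Filter.Tendsto (fun η : ℝ => Vs / (1 + η * d)) Filter.atTop (nhds 0) :=
    Filter.Tendsto.div_atTop tendsto_const_nhds htop
  have hf0 : Filter.Tendsto (fun η => Vss + W (ν η) / b1) Filter.atTop (nhds 0) := by
    apply tendsto_of_tendsto_of_tendsto_of_le_of_le'
      (tendsto_const_nhds : Filter.Tendsto (fun _ : ℝ => (0:ℝ)) Filter.atTop (nhds 0)) hupper
    · filter_upwards [Filter.eventually_ge_atTop (0:ℝ)] with η hη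
      exact le_of_lt (hfpos η hη)
    · filter_upwards [Filter.eventually_ge_atTop (0:ℝ)] with η hη
      rw [← heq η hη]
      have h1 : 0 < ν η := lt_trans one_pos (hν1 η hη)
      have hge : d ≤ 1 - 1/ν η := by
        have h2 : 1/ν η ≤ 1/νss := by
          gcongr
          exact le_of_lt (hgt η hη)
        simp only [hd_def]; linarith
      have hpd : 0 < 1 + η * d := by nlinarith
      have hle2 : 1 + η * d ≤ 1 + η * (1 - 1/ν η) := by nlinarith
      exact div_le_div_of_nonneg_left (le_of_lt hVs) hpd hle2
  -- W (ν η) → W νss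
  have hWν : Filter.Tendsto (fun η => W (ν η)) Filter.atTop (nhds (W νss)) := by
    have h := (hf0.sub_const Vss).mul_const b1
    have heq2 : (fun η => (Vss + W (ν η)/b1 - Vss) * b1) = fun η => W (ν η) := by
      funext η; field_simp; ring
    rw [heq2] at h
    rw [hWss]
    simpa using h
  -- first limit
  have hνlim : Filter.Tendsto ν Filter.atTop (nhds νss) := by
    rw [tendsto_order]
    constructor
    · intro a ha
      filter_upwards [Filter.eventually_ge_atTop (0:ℝ)] with η hη
      exact lt_trans ha (hgt η hη)
    · intro b hb
      have hbmem : b ∈ Set.Ici (1:ℝ) := le_of_lt (lt_trans hνss hb)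
      have hWb : W νss < W b := hWmono hmemss hbmem hb
      have hev : ∀ᶠ η in Filter.atTop, W (ν η) < W b := hWν.eventually_lt_const hWb
      filter_upwards [hev, Filter.eventually_ge_atTop (0:ℝ)] with η h1 h2
      by_contra h
      push_neg at h
      exact absurd (hWmono.monotoneOn hbmem (hmem η h2) h) (not_le.mpr h1)
  -- third limit
  have hc : Filter.Tendsto (fun η => 1 - 1/(ν η)) Filter.atTop (nhds d) := by
    have h1 : Filter.Tendsto (fun η => 1/(ν η)) Filter.atTop (nhds (1/νss)) := by
      simp only [one_div]
      exact hνlim.inv₀ (ne_of_gt hνss0)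
    simpa [hd_def] using (tendsto_const_nhds : Filter.Tendsto (fun _ : ℝ => (1:ℝ))
      Filter.atTop (nhds 1)).sub h1
  have hg : Filter.Tendsto (fun η => 1/η + (1 - 1/ν η)) Filter.atTop (nhds d) := by
    have h1 : Filter.Tendsto (fun η : ℝ => 1/η) Filter.atTop (nhds 0) := by
      simpa [one_div] using (tendsto_inv_atTop_zero : Filter.Tendsto (fun x : ℝ => x⁻¹)
        Filter.atTop (nhds 0))
    simpa using h1.add hc
  have hginv := hg.inv₀ (ne_of_gt hd)
  have key := hginv.const_mul Vs
  have hVsd : Vs * d⁻¹ = Vs / (1 - 1/νss) := by rw [hd_def]; ring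
  rw [hVsd] at key
  have h3 : Filter.Tendsto (fun η => η * (Vss + W (ν η) / b1)) Filter.atTop
      (nhds (Vs / (1 - 1/νss))) := by
    apply Filter.Tendsto.congr' _ key
    filter_upwards [Filter.eventually_gt_atTop (0:ℝ)] with η hη
    rw [← heq η (le_of_lt hη)]
    have hden' := hden η (le_of_lt hη)
    have hη0 : η ≠ 0 := ne_of_gt hη
    have hden0 : 1 + η * (1 - 1/ν η) ≠ 0 := ne_of_gt hden'
    have hν0 : ν η ≠ 0 := ne_of_gt (lt_trans one_pos (hν1 η (le_of_lt hη)))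
    have hsum : 1/η + (1 - 1/ν η) = (1 + η * (1 - 1/ν η))/η := by field_simp
    have hsum0 : 1/η + (1 - 1/ν η) ≠ 0 := by
      rw [hsum]; exact div_ne_zero hden0 hη0
    rw [hsum]
    field_simp
  exact ⟨hνlim, hf0, h3⟩
end
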